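/- arXiv:2403.04589 — 3 statements merged into one kernel-verified Lean document; each statement's English description precedes it below -/
import Mathlib

section
/- Let D be a finite directed acyclic graph. Then the minimum number of directed paths of D whose vertex sets together cover all vertices of D is equal to the maximum size of an antichain of D, i.e., of a set of vertices that are pairwise unreachable from one another by directed paths. -/
/-- A directed path in the digraph with arc relation `A`. -/
structure DiPath {V : Type*} (A : V → V → Prop) where
  len : ℕ
  verts : Fin (len + 1) → V
  inj : Function.Injective verts
  adj : ∀ i : Fin len, A (verts i.castSucc) (verts i.succ)

/-!
Reachability `ReflTransGen A` is a partial order on the vertices of a DAG. A directed path is a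
chain of this order, so it meets an antichain at most once; conversely a finite chain lies on one
directed path: join consecutive elements by walks, and acyclicity makes the concatenation a path.
The theorem is thus Dilworth's theorem for the reachability order, proved by Galvin's induction:
remove a maximal element `a`, partition the rest into `k` chains, and let `X` consist of the
largest element of each chain that lies in some antichain of size `k`; `X` is again an antichain.
If `X ∪ {a}` is an antichain we add the chain `{a}`. Otherwise some `x ∈ X` lies below `a`, and
removing `a` together with the part of the chain of `x` below `x` leaves a set without antichains
of size `k`, which by induction splits into at most `k - 1` chains.
-/

open Relation Finset

section Chains

variable {α : Type*} [Preorder α] {s : Finset α}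

theorem IsChain.exists_isLeast_of_finset (hs : IsChain (· ≤ ·) (s : Set α))
    (hne : s.Nonempty) : ∃ a, IsLeast (s : Set α) a := by
  obtain ⟨a, ha⟩ := s.exists_minimal hne
  exact ⟨a, ha.1, fun z hz => hs.le_of_not_gt hz ha.1 (ha.not_lt hz)⟩

theorem IsChain.exists_isGreatest_of_finset (hs : IsChain (· ≤ ·) (s : Set α))
    (hne : s.Nonempty) : ∃ a, IsGreatest (s : Set α) a := by
  obtain ⟨a, ha⟩ := s.exists_maximal hne
  exact ⟨a, ha.1, fun z hz => hs.le_of_not_gt ha.1 hz (ha.not_gt hz)⟩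

end Chains

namespace Finpartition

variable {α : Type*} [DecidableEq α] {P : Finset α}

def IsChainPartition [LE α] (F : Finpartition P) : Prop :=
  ∀ C ∈ F.parts, IsChain (· ≤ ·) (C : Set α)

variable [PartialOrder α] {F : Finpartition P}

theorem IsChainPartition.exists_mem_of_isAntichain (hF : F.IsChainPartition) {T : Finset α}
    (hTP : T ⊆ P) (hT : IsAntichain (· ≤ ·) (T : Set α)) (hTcard : T.card = F.parts.card)
    {C : Finset α} (hC : C ∈ F.parts) : ∃ t ∈ T, t ∈ C := by
  have hinj : Set.InjOn F.part T := fun t ht u hu htu =>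
    inter_subsingleton_of_isAntichain_of_isChain hT (hF _ (F.part_mem.2 (hTP ht)))
      ⟨ht, F.mem_part_self.2 (hTP ht)⟩ ⟨hu, htu ▸ F.mem_part_self.2 (hTP hu)⟩
  have himage : T.image F.part = F.parts :=
    eq_of_subset_of_card_le (image_subset_iff.2 fun t ht => F.part_mem.2 (hTP ht))
      (by rw [card_image_of_injOn hinj, hTcard])
  obtain ⟨t, ht, rfl⟩ := mem_image.1 (himage ▸ hC)
  exact ⟨t, ht, F.mem_part_self.2 (hTP ht)⟩

theorem IsChainPartition.exists_isAntichain_dominating (hF : F.IsChainPartition) {S : Finset α}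
    (hSP : S ⊆ P) (hS : IsAntichain (· ≤ ·) (S : Set α)) (hScard : S.card = F.parts.card) :
    ∃ X ⊆ P, IsAntichain (· ≤ ·) (X : Set α) ∧ F.parts.card ≤ X.card ∧
      ∀ x ∈ X, ∀ T ⊆ P, IsAntichain (· ≤ ·) (T : Set α) → F.parts.card ≤ T.card →
        ∃ t ∈ T, t ∈ F.part x ∧ t ≤ x := by
  classical
  set good : α → Prop := fun z => ∃ T ⊆ P, IsAntichain (· ≤ ·) (T : Set α) ∧
    T.card = F.parts.card ∧ z ∈ T
  refine ⟨P.filter fun z => good z ∧ ∀ y ∈ F.part z, good y → y ≤ z, filter_subset _ _, ?_, ?_,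
    ?_⟩
  · intro x hx y hy hne hxy
    obtain ⟨hxP, -, hxtop⟩ := mem_filter.1 hx
    obtain ⟨T, hTP, hT, hTcard, hyT⟩ := (mem_filter.1 hy).2.1
    obtain ⟨t, htT, htx⟩ := hF.exists_mem_of_isAntichain hTP hT hTcard (F.part_mem.2 hxP)
    have htlex : t ≤ x := hxtop t htx ⟨T, hTP, hT, hTcard, htT⟩
    obtain rfl : t = y := hT.eq htT hyT (htlex.trans hxy)
    exact hne (le_antisymm hxy htlex)
  · refine (card_le_card fun C hC => ?_).trans (card_image_le (f := F.part))
    have hgood : (C.filter good).Nonempty := by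
      obtain ⟨s, hsS, hsC⟩ := hF.exists_mem_of_isAntichain hSP hS hScard hC
      exact ⟨s, mem_filter.2 ⟨hsC, S, hSP, hS, hScard, hsS⟩⟩
    obtain ⟨z, hz, hzmax⟩ :=
      ((hF C hC).mono (coe_subset.2 (filter_subset _ _))).exists_isGreatest_of_finset hgood
    obtain ⟨hzC, hzgood⟩ := mem_filter.1 hz
    have hpart : F.part z = C := F.part_eq_of_mem hC hzC
    refine mem_image.2 ⟨z, mem_filter.2 ⟨F.subset hC hzC, hzgood, fun y hy hgy => ?_⟩, hpart⟩
    exact hzmax (mem_filter.2 ⟨hpart ▸ hy, hgy⟩)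
  · intro x hx T' hT'P hT' hT'card
    obtain ⟨T, hTT', hTcard⟩ := exists_subset_card_eq hT'card
    have hTP := hTT'.trans hT'P
    have hT := hT'.subset hTT'
    obtain ⟨hxP, -, hxtop⟩ := mem_filter.1 hx
    obtain ⟨t, htT, htx⟩ := hF.exists_mem_of_isAntichain hTP hT hTcard (F.part_mem.2 hxP)
    exact ⟨t, hTT' htT, htx, hxtop t htx ⟨T, hTP, hT, hTcard, htT⟩⟩

theorem exists_isChainPartition_of_sdiff {P K : Finset α} (hKP : K ⊆ P) (hK : K.Nonempty)
    (hKc : IsChain (· ≤ ·) (K : Set α)) {F : Finpartition (P \ K)} (hF : F.IsChainPartition)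
    {S : Finset α} (hSP : S ⊆ P) (hS : IsAntichain (· ≤ ·) (S : Set α))
    (hScard : F.parts.card < S.card) :
    ∃ F' : Finpartition P, F'.IsChainPartition ∧
      ∃ S' ⊆ P, IsAntichain (· ≤ ·) (S' : Set α) ∧ S'.card = F'.parts.card := by
  obtain ⟨S', hS'S, hS'card⟩ := exists_subset_card_eq hScard
  refine ⟨F.extend hK.ne_empty sdiff_disjoint (sdiff_union_of_subset hKP), fun C hC => ?_,
    S', hS'S.trans hSP, hS.subset hS'S, by rw [card_extend, hS'card]⟩
  rw [extend_parts, mem_insert] at hC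
  rcases hC with rfl | hC
  exacts [hKc, hF C hC]

theorem _root_.Finset.exists_isChainPartition_isAntichain (P : Finset α) :
    ∃ F : Finpartition P, F.IsChainPartition ∧
      ∃ S ⊆ P, IsAntichain (· ≤ ·) (S : Set α) ∧ S.card = F.parts.card := by
  classical
  induction P using Finset.strongInduction with | H P ih => ?_
  rcases P.eq_empty_or_nonempty with rfl | hP
  · exact ⟨⊥, fun C hC => by simp at hC, ∅, empty_subset _, by simp, by simp⟩
  obtain ⟨a, ha⟩ := P.exists_maximal hP
  have haP : {a} ⊆ P := singleton_subset_iff.2 ha.1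
  obtain ⟨F, hF, S, hSP, hS, hScard⟩ := ih (P \ {a}) (sdiff_ssubset haP (singleton_nonempty a))
  obtain ⟨X, hXP, hX, hXcard, hXtop⟩ := hF.exists_isAntichain_dominating hSP hS hScard
  by_cases hXa : ∃ x ∈ X, x ≤ a
  · obtain ⟨x, hxX, hxa⟩ := hXa
    set K := insert a ((F.part x).filter (· ≤ x))
    have hKP : K ⊆ P :=
      insert_subset ha.1 ((filter_subset _ _).trans ((F.part_subset x).trans sdiff_subset))
    have hKc : IsChain (· ≤ ·) (K : Set α) := by
      rw [coe_insert]
      exact ((hF _ (F.part_mem.2 (hXP hxX))).mono (coe_subset.2 (filter_subset _ _))).insert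
        fun b hb _ => Or.inr ((mem_filter.1 hb).2.trans hxa)
    obtain ⟨F', hF', S', hS'P, hS', hS'card⟩ :=
      ih (P \ K) (sdiff_ssubset hKP (insert_nonempty _ _))
    refine exists_isChainPartition_of_sdiff hKP (insert_nonempty _ _) hKc hF'
      (hXP.trans sdiff_subset) hX (lt_of_lt_of_le ?_ hXcard)
    by_contra! hle
    have hS'a : S' ⊆ P \ {a} :=
      hS'P.trans (sdiff_subset_sdiff subset_rfl (singleton_subset_iff.2 (mem_insert_self a _)))
    obtain ⟨t, htS', htx, htle⟩ := hXtop x hxX S' hS'a hS' (hle.trans hS'card.ge)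
    exact (mem_sdiff.1 (hS'P htS')).2 (mem_insert_of_mem (mem_filter.2 ⟨htx, htle⟩))
  · push Not at hXa
    have haX : a ∉ X := fun h => (mem_sdiff.1 (hXP h)).2 (mem_singleton_self a)
    refine exists_isChainPartition_of_sdiff haP (singleton_nonempty a) (by simp) hF
      (insert_subset ha.1 (hXP.trans sdiff_subset)) ?_ ?_
    · rw [coe_insert]
      exact isAntichain_insert.2 ⟨hX, fun b hb _ =>
        ⟨fun hab => hXa b hb (ha.2 (sdiff_subset (hXP hb)) hab), hXa b hb⟩⟩
    · rw [card_insert_of_notMem haX]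
      omega

end Finpartition

section Digraph

variable {V : Type*} {A : V → V → Prop}

theorem DiPath.reflTransGen_verts (p : DiPath A) {i j : Fin (p.len + 1)} (hij : i ≤ j) :
    ReflTransGen A (p.verts i) (p.verts j) := by
  induction j using Fin.induction with
  | zero => rw [Fin.le_zero_iff.1 hij]
  | succ j ih =>
    rcases hij.lt_or_eq with h | rfl
    · exact (ih (Fin.le_castSucc_iff.2 h)).tail (p.adj j)
    · rfl

theorem DiPath.isChain_range_verts (p : DiPath A) :
    IsChain (ReflTransGen A) (Set.range p.verts) := by
  rintro _ ⟨i, rfl⟩ _ ⟨j, rfl⟩ -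
  exact (le_total i j).imp p.reflTransGen_verts p.reflTransGen_verts

theorem card_le_of_diPath_cover {S : Finset V}
    (hS : (S : Set V).Pairwise fun u v => ¬ ReflTransGen A u v) {n : ℕ} (C : Fin n → DiPath A)
    (hC : ∀ v, ∃ i, v ∈ Set.range (C i).verts) : S.card ≤ n := by
  choose f hf using hC
  have hinj : Set.InjOn f S := fun u hu v hv huv => by
    by_contra hne
    exact ((C (f u)).isChain_range_verts (hf u) (huv ▸ hf v) hne).elim (hS hu hv hne)
      (hS hv hu (Ne.symm hne))
  simpa using card_le_card_of_injOn f (fun v _ => mem_coe.2 (mem_univ (f v))) hinj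

theorem List.IsChain.nodup (hA : ∀ v, ¬ TransGen A v v) {l : List V} (hl : List.IsChain A l) :
    l.Nodup :=
  (hl.imp fun _ _ => TransGen.single).pairwise.imp
    fun {a b} (hab : TransGen A a b) (heq : a = b) => hA b (heq ▸ hab)

theorem exists_diPath_of_isChain (hA : ∀ v, ¬ TransGen A v v) {a : V} {l : List V}
    (hl : List.IsChain A (a :: l)) : ∃ p : DiPath A, ∀ v ∈ a :: l, v ∈ Set.range p.verts :=
  ⟨⟨l.length, (a :: l).get, (hl.nodup hA).injective_get,
    fun i => List.isChain_iff_getElem.1 hl i (by simp)⟩, fun _ hv => List.mem_iff_get.1 hv⟩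

abbrev reachabilityOrder (hA : ∀ v, ¬ TransGen A v v) : PartialOrder V where
  le := ReflTransGen A
  le_refl _ := .refl
  le_trans _ _ _ := ReflTransGen.trans
  le_antisymm a b hab hba := by
    rcases hab.cases_head with rfl | ⟨c, hac, hcb⟩
    · rfl
    · exact (hA a (TransGen.head' hac (hcb.trans hba))).elim

variable [Preorder V]

theorem exists_isChain_cons_superset (hle : ∀ x y : V, x ≤ y → ReflTransGen A x y)
    {s : Finset V} (hs : IsChain (· ≤ ·) (s : Set V)) {a : V}
    (ha : a ∈ lowerBounds (s : Set V)) : ∃ l, List.IsChain A (a :: l) ∧ ∀ z ∈ s, z ∈ a :: l := by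
  classical
  induction s using Finset.strongInduction generalizing a with | H s ih => ?_
  rcases s.eq_empty_or_nonempty with rfl | hne
  · exact ⟨[], .singleton a, by simp⟩
  obtain ⟨m, hm, hmle⟩ := hs.exists_isLeast_of_finset hne
  obtain ⟨p, hp, hplast⟩ := List.exists_isChain_cons_of_relationReflTransGen (hle _ _ (ha hm))
  obtain ⟨l, hl, hls⟩ := ih (s.erase m) (erase_ssubset hm) (hs.mono (by simp))
    (fun z hz => hmle (mem_of_mem_erase hz))
  refine ⟨p ++ l, ?_, fun z hz => ?_⟩
  · refine hp.append hl.tail fun x hx y hy => ?_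
    rw [List.getLast?_eq_some_getLast (List.cons_ne_nil _ _), hplast, Option.mem_some_iff] at hx
    exact hx ▸ List.isChain_cons.1 hl |>.1 y hy
  · by_cases hzm : z = m
    · have := hplast ▸ List.getLast_mem (List.cons_ne_nil a p)
      simp only [hzm, List.mem_cons, List.mem_append] at this ⊢
      tauto
    · rcases List.mem_cons.1 (hls z (mem_erase.2 ⟨hzm, hz⟩)) with rfl | h
      · exact absurd rfl hzm
      · simp [h]

theorem exists_diPath_superset_of_isChain (hA : ∀ v, ¬ TransGen A v v)
    (hle : ∀ x y : V, x ≤ y → ReflTransGen A x y) {s : Finset V}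
    (hs : IsChain (· ≤ ·) (s : Set V)) (hne : s.Nonempty) :
    ∃ p : DiPath A, (s : Set V) ⊆ Set.range p.verts := by
  obtain ⟨a, -, ha⟩ := hs.exists_isLeast_of_finset hne
  obtain ⟨l, hl, hsl⟩ := exists_isChain_cons_superset hle hs ha
  obtain ⟨p, hp⟩ := exists_diPath_of_isChain hA hl
  exact ⟨p, fun v hv => hp v (hsl v hv)⟩

theorem exists_diPath_cover_of_isChainPartition [Fintype V] [DecidableEq V]
    (hA : ∀ v, ¬ TransGen A v v) (hle : ∀ x y : V, x ≤ y → ReflTransGen A x y)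
    {F : Finpartition (univ : Finset V)} (hF : F.IsChainPartition) :
    ∃ p : Fin F.parts.card → DiPath A, ∀ v, ∃ i, v ∈ Set.range (p i).verts := by
  have hpath (C : F.parts) : ∃ p : DiPath A, ((C : Finset V) : Set V) ⊆ Set.range p.verts :=
    exists_diPath_superset_of_isChain hA hle (hF C C.2) (F.nonempty_of_mem_parts C.2)
  choose p hp using hpath
  refine ⟨p ∘ F.parts.equivFin.symm, fun v =>
    ⟨F.parts.equivFin ⟨F.part v, F.part_mem.2 (mem_univ v)⟩, ?_⟩⟩
  rw [Function.comp_apply, Equiv.symm_apply_apply]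
  exact hp _ (F.mem_part_self.2 (mem_univ v))

end Digraph

/-- Dilworth's theorem for finite DAGs: the minimum number of directed paths covering all
vertices equals the maximum size of an antichain (a set of pairwise unreachable vertices). -/
theorem dag_min_path_cover_eq_max_antichain {V : Type*} [Fintype V] (A : V → V → Prop)
    (hacyclic : ∀ v : V, ¬ Relation.TransGen A v v) :
    ∃ k : ℕ,
      IsLeast {m | ∃ C : Fin m → DiPath A, ∀ v : V, ∃ i, v ∈ Set.range (C i).verts} k ∧
      IsGreatest {m | ∃ S : Finset V, S.card = m ∧
        (S : Set V).Pairwise fun u v => ¬ Relation.ReflTransGen A u v} k := by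
  classical
  let _ := reachabilityOrder hacyclic
  obtain ⟨F, hF, S, -, hS, hScard⟩ := (univ : Finset V).exists_isChainPartition_isAntichain
  obtain ⟨p, hp⟩ := exists_diPath_cover_of_isChainPartition hacyclic (fun _ _ => id) hF
  exact ⟨F.parts.card,
    ⟨⟨p, hp⟩, fun _ ⟨C, hC⟩ => hScard ▸ card_le_of_diPath_cover hS C hC⟩,
    ⟨⟨S, hScard, hS⟩, fun _ ⟨T, hT, hTa⟩ => hT ▸ card_le_of_diPath_cover hTa p hp⟩⟩
end

section
/- Let 𝒯 = (T, λ) be a temporal oriented tree, let G be its connectivity graph, and let S be a set of vertices of 𝒯. Then S is contained in the vertex set of some temporal path of 𝒯 if and only if S is contained in a clique of G (i.e., the vertices of S are pairwise adjacent in G). -/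
/-! A temporal digraph on vertex set `V` is encoded by its arc-labeling
`lab : V → V → Finset ℕ`: there is an arc `u → v` iff `lab u v` is nonempty,
and `lab u v` is the (finite) set of time-steps at which the arc `u → v` is active. -/

/-- A temporal (directed) path: vertices `verts 0, …, verts len`, pairwise distinct,
traversed at strictly increasing times `times 0 < … < times (len-1)`, each arc being
active at the time it is traversed. A single vertex (`len = 0`) is a temporal path. -/
structure TPath {V : Type*} (lab : V → V → Finset ℕ) where
  len : ℕ
  verts : Fin (len + 1) → V
  times : Fin len → ℕ
  inj : Function.Injective verts
  mono : StrictMono times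
  mem_lab : ∀ i : Fin len, times i ∈ lab (verts i.castSucc) (verts i.succ)

/-- The set of vertices lying on a temporal path. -/
def TPath.vertexSet {V : Type*} {lab : V → V → Finset ℕ} (P : TPath lab) : Set V :=
  Set.range P.verts

/-- `P` is a temporal path from `u` to `v`. -/
def TPath.FromTo {V : Type*} {lab : V → V → Finset ℕ} (P : TPath lab) (u v : V) : Prop :=
  P.verts 0 = u ∧ P.verts (Fin.last P.len) = v

/-- Two vertices are temporally connected if some temporal path contains both of them. -/
def TempConnected {V : Type*} (lab : V → V → Finset ℕ) (u v : V) : Prop :=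
  ∃ P : TPath lab, u ∈ P.vertexSet ∧ v ∈ P.vertexSet

/-- A temporal antichain: a set of pairwise not temporally connected vertices. -/
def IsTempAntichain {V : Type*} (lab : V → V → Finset ℕ) (S : Set V) : Prop :=
  S.Pairwise fun u v => ¬ TempConnected lab u v

/-- A family of temporal paths is a temporal path cover if every vertex lies on some path. -/
def IsTPC {V : Type*} (lab : V → V → Finset ℕ) {m : ℕ} (C : Fin m → TPath lab) : Prop :=
  ∀ v : V, ∃ i, v ∈ (C i).vertexSet

/-- Two temporal paths are temporally disjoint if any two of their arcs sharing an
end-vertex are traversed at distinct time-steps. -/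
def TDisjoint {V : Type*} {lab : V → V → Finset ℕ} (P Q : TPath lab) : Prop :=
  ∀ i : Fin P.len, ∀ j : Fin Q.len,
    (P.verts i.castSucc = Q.verts j.castSucc ∨ P.verts i.castSucc = Q.verts j.succ ∨
     P.verts i.succ = Q.verts j.castSucc ∨ P.verts i.succ = Q.verts j.succ) →
    P.times i ≠ Q.times j

/-- The set of possible cardinalities of temporal path covers. -/
def tpcSizes {V : Type*} (lab : V → V → Finset ℕ) : Set ℕ :=
  {m | ∃ C : Fin m → TPath lab, IsTPC lab C}

/-- The set of possible cardinalities of temporally disjoint path covers. -/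
def tdpcSizes {V : Type*} (lab : V → V → Finset ℕ) : Set ℕ :=
  {m | ∃ C : Fin m → TPath lab, IsTPC lab C ∧ ∀ i j, i ≠ j → TDisjoint (C i) (C j)}

/-- The set of possible cardinalities of temporal antichains. -/
def antichainSizes {V : Type*} (lab : V → V → Finset ℕ) : Set ℕ :=
  {m | ∃ S : Finset V, S.card = m ∧ IsTempAntichain lab ↑S}

/-- The underlying undirected graph (forget orientations and labels). -/
def underlyingGraph {V : Type*} (lab : V → V → Finset ℕ) : SimpleGraph V where
  Adj u v := u ≠ v ∧ ((lab u v).Nonempty ∨ (lab v u).Nonempty)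
  symm := ⟨by intro u v h; exact ⟨h.1.symm, h.2.symm⟩⟩
  loopless := ⟨by intro v h; exact h.1 rfl⟩

/-- All time labels are positive integers. -/
def PositiveLabels {V : Type*} (lab : V → V → Finset ℕ) : Prop :=
  ∀ u v : V, ∀ t ∈ lab u v, 0 < t

/-- A temporal oriented tree: the underlying undirected graph is a tree and the digraph is
an orientation of it (no pair of opposite arcs, no loops). -/
def IsTemporalOrientedTree {V : Type*} (lab : V → V → Finset ℕ) : Prop :=
  (underlyingGraph lab).IsTree ∧ ∀ u v : V, (lab u v).Nonempty → lab v u = ∅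

/-- The connectivity graph: two distinct vertices are adjacent iff temporally connected. -/
def connGraph {V : Type*} (lab : V → V → Finset ℕ) : SimpleGraph V where
  Adj u v := u ≠ v ∧ TempConnected lab u v
  symm := ⟨by intro u v h; exact ⟨h.1.symm, h.2.imp fun P hP => ⟨hP.2, hP.1⟩⟩⟩
  loopless := ⟨by intro v h; exact h.1 rfl⟩

/-- `c` lists the vertices of an induced cycle of length `n` of `G`, in cyclic order:
the listed vertices are distinct and two of them are adjacent iff they are cyclically
consecutive. -/
def IsInducedCycle {V : Type*} (G : SimpleGraph V) (n : ℕ) (c : Fin n → V) : Prop :=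
  Function.Injective c ∧
    ∀ i j : Fin n, G.Adj (c i) (c j) ↔ ((i.val + 1) % n = j.val ∨ (j.val + 1) % n = i.val)

/-- A hole: an induced cycle of length at least 5. -/
def HasHole {V : Type*} (G : SimpleGraph V) : Prop :=
  ∃ n, 5 ≤ n ∧ ∃ c : Fin n → V, IsInducedCycle G n c

/-- An anti-hole: an induced subgraph whose complement is a cycle of length at least 5. -/
def HasAntihole {V : Type*} (G : SimpleGraph V) : Prop :=
  ∃ n, 5 ≤ n ∧ ∃ c : Fin n → V, IsInducedCycle Gᶜ n c

/-- A graph is weakly chordal if it has no hole and no anti-hole. -/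
def WeaklyChordal {V : Type*} (G : SimpleGraph V) : Prop :=
  ¬ HasHole G ∧ ¬ HasAntihole G

/-! In an oriented forest a directed walk never backtracks, since no two arcs are opposite,
so it is a path, and hence the unique path between its ends. A temporal path is in particular
a directed walk, so the vertices of a clique `S` of the connectivity graph are pairwise
comparable for directed reachability. Let `u` be a least and `v` a greatest element of `S`,
and `R` a temporal path through `u` and `v`. For `s ∈ S`, going along `R` from its start to
`u`, then by directed walks from `u` to `s` and from `s` to `v`, then along `R` to its end,
is a directed walk with the same ends as `R`; so it is `R`, and `s` lies on `R`. -/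

open Relation

theorem IsChain.exists_forall_rel_of_finite {α : Type*} {r : α → α → Prop} [Std.Refl r]
    [IsTrans α r] {s : Set α} (hs : IsChain r s) (hfin : s.Finite) (hne : s.Nonempty) :
    ∃ z ∈ s, ∀ x ∈ s, r x z := by
  have := hne.to_subtype
  have := hfin.to_subtype
  obtain ⟨z, hz⟩ := (hs.directed (f := id)).finite_le id
  exact ⟨z, z.2, fun x hx => hz ⟨x, hx⟩⟩

namespace SimpleGraph

variable {V : Type*} {G : SimpleGraph V} {r : V → V → Prop}

theorem exists_walk_of_reflTransGen (hr : ∀ x y, r x y → G.Adj x y) {a b : V}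
    (h : ReflTransGen r a b) : ∃ w : G.Walk a b, ∀ d ∈ w.darts, r d.fst d.snd := by
  induction h using ReflTransGen.head_induction_on with
  | refl => exact ⟨.nil, by simp⟩
  | head hxy _ ih =>
    obtain ⟨w, hw⟩ := ih
    exact ⟨.cons (hr _ _ hxy) w, by simpa [hxy] using hw⟩

theorem IsAcyclic.isPath_of_forall_darts (hG : G.IsAcyclic) (hr : ∀ x y, r x y → ¬ r y x) :
    ∀ {u v : V} (w : G.Walk u v), (∀ d ∈ w.darts, r d.fst d.snd) → w.IsPath
  | _, _, .nil, _ => .nil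
  | _, _, .cons h p, hw => by
    simp only [Walk.darts_cons, List.mem_cons, forall_eq_or_imp] at hw
    have hp := hG.isPath_of_forall_darts hr p hw.2
    refine (Walk.cons_isPath_iff h p).2 ⟨hp, fun hu => ?_⟩
    -- A vertex of the path `p` adjacent to its start is its second vertex, so `w` would
    -- go back along the arc it has just used.
    have hsnd := hG.eq_snd_of_adj_start hp h.symm hu
    cases p with
    | nil => exact h.ne (by simpa using hu)
    | cons h' q =>
      simp only [Walk.snd_cons] at hsnd
      subst hsnd
      exact hr _ _ hw.1 (hw.2 _ List.mem_cons_self)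

theorem Walk.support_subset_of_forall_darts {R : Set V} {a b : V} (w : G.Walk a b)
    (ha : a ∈ R) (hw : ∀ d ∈ w.darts, d.snd ∈ R) : ∀ x ∈ w.support, x ∈ R := by
  rw [← w.cons_tail_support, ← w.map_snd_darts]
  simpa [ha] using hw

/-- In a forest, directed walks are unique: every vertex on a directed walk from `a` to `b`
lies on any directed walk from `a` to `b` inside `R`. -/
theorem IsAcyclic.mem_of_reflTransGen (hG : G.IsAcyclic) (hadj : ∀ x y, r x y → G.Adj x y)
    (hr : ∀ x y, r x y → ¬ r y x) {R : Set V} {a b s : V} (ha : a ∈ R)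
    (hab : ReflTransGen (fun x y => r x y ∧ y ∈ R) a b) (has : ReflTransGen r a s)
    (hsb : ReflTransGen r s b) : s ∈ R := by
  obtain ⟨w, hw⟩ := exists_walk_of_reflTransGen (fun x y h => hadj x y h.1) hab
  obtain ⟨w₁, hw₁⟩ := exists_walk_of_reflTransGen hadj has
  obtain ⟨w₂, hw₂⟩ := exists_walk_of_reflTransGen hadj hsb
  have hw_path := hG.isPath_of_forall_darts hr w fun d hd => (hw d hd).1
  have hw₁₂_path := hG.isPath_of_forall_darts hr (w₁.append w₂) <| by
    simpa [Walk.darts_append, or_imp, forall_and] using And.intro hw₁ hw₂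
  have hw_eq : w = w₁.append w₂ :=
    congrArg Subtype.val ((hG.subsingleton_path a b).elim ⟨w, hw_path⟩ ⟨_, hw₁₂_path⟩)
  refine w.support_subset_of_forall_darts ha (fun d hd => (hw d hd).2) s ?_
  rw [hw_eq, Walk.mem_support_append_iff]
  exact Or.inl w₁.end_mem_support

end SimpleGraph

section Temporal

variable {V : Type*} {lab : V → V → Finset ℕ}

def HasArc (lab : V → V → Finset ℕ) (u v : V) : Prop :=
  (lab u v).Nonempty

def IsOriented (lab : V → V → Finset ℕ) : Prop :=
  ∀ u v : V, (lab u v).Nonempty → lab v u = ∅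

theorem IsOriented.not_hasArc (h : IsOriented lab) {u v : V} (huv : HasArc lab u v) :
    ¬ HasArc lab v u := by
  simp [HasArc, h u v huv]

theorem IsOriented.adj (h : IsOriented lab) {u v : V} (huv : HasArc lab u v) :
    (underlyingGraph lab).Adj u v :=
  ⟨by rintro rfl; exact h.not_hasArc huv huv, Or.inl huv⟩

def TPath.single (lab : V → V → Finset ℕ) (x : V) : TPath lab where
  len := 0
  verts _ := x
  times := Fin.elim0
  inj _ _ _ := Fin.ext (by omega)
  mono i := i.elim0
  mem_lab i := i.elim0

theorem TPath.reflTransGen_verts (P : TPath lab) {i j : Fin (P.len + 1)} (hij : i ≤ j) :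
    ReflTransGen (fun x y => HasArc lab x y ∧ y ∈ P.vertexSet) (P.verts i) (P.verts j) := by
  refine (reflTransGen_of_succ_of_le (fun k l => _) (fun k hk => ?_) hij).lift P.verts
    fun _ _ h => h
  obtain ⟨m, rfl⟩ := Fin.exists_castSucc_eq.2 (hk.2.trans_le (Fin.le_last j)).ne
  rw [Fin.orderSucc_castSucc]
  exact ⟨⟨_, P.mem_lab m⟩, m.succ, rfl⟩

theorem TPath.reflTransGen_hasArc (P : TPath lab) {i j : Fin (P.len + 1)} (hij : i ≤ j) :
    ReflTransGen (HasArc lab) (P.verts i) (P.verts j) :=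
  ReflTransGen.mono (fun _ _ h => h.1) _ _ (P.reflTransGen_verts hij)

theorem TempConnected.reflTransGen_or {u v : V} (h : TempConnected lab u v) :
    ReflTransGen (HasArc lab) u v ∨ ReflTransGen (HasArc lab) v u := by
  obtain ⟨P, ⟨i, rfl⟩, ⟨j, rfl⟩⟩ := h
  exact (le_total i j).imp P.reflTransGen_hasArc P.reflTransGen_hasArc

theorem SimpleGraph.IsClique.tempConnected {S : Set V} (hS : (connGraph lab).IsClique S)
    {u v : V} (hu : u ∈ S) (hv : v ∈ S) : TempConnected lab u v := by
  obtain rfl | huv := eq_or_ne u v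
  · exact ⟨.single lab u, ⟨0, rfl⟩, ⟨0, rfl⟩⟩
  · exact (hS hu hv huv).2

theorem SimpleGraph.IsClique.isChain_reflTransGen {S : Set V}
    (hS : (connGraph lab).IsClique S) : IsChain (ReflTransGen (HasArc lab)) S :=
  fun _ hu _ hv huv => (hS hu hv huv).2.reflTransGen_or

theorem TPath.mem_vertexSet_of_reflTransGen (horient : IsOriented lab)
    (hacyc : (underlyingGraph lab).IsAcyclic) (R : TPath lab) {u v s : V}
    (hu : u ∈ R.vertexSet) (hv : v ∈ R.vertexSet) (hus : ReflTransGen (HasArc lab) u s)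
    (hsv : ReflTransGen (HasArc lab) s v) : s ∈ R.vertexSet := by
  obtain ⟨i, rfl⟩ := hu
  obtain ⟨j, rfl⟩ := hv
  exact hacyc.mem_of_reflTransGen (fun _ _ => horient.adj) (fun _ _ => horient.not_hasArc)
    ⟨0, rfl⟩ (R.reflTransGen_verts (Fin.zero_le (Fin.last R.len)))
    ((R.reflTransGen_hasArc (Fin.zero_le i)).trans hus)
    (hsv.trans (R.reflTransGen_hasArc (Fin.le_last j)))

end Temporal

theorem subset_tpath_iff_clique_general {V : Type*} [Fintype V] (lab : V → V → Finset ℕ)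
    (htree : IsTemporalOrientedTree lab) (S : Set V) :
    (∃ P : TPath lab, S ⊆ P.vertexSet) ↔ (connGraph lab).IsClique S := by
  refine ⟨fun ⟨P, hP⟩ u hu v hv huv => ⟨huv, P, hP hu, hP hv⟩, fun hS => ?_⟩
  rcases S.eq_empty_or_nonempty with rfl | hne
  · exact ⟨.single lab htree.1.connected.nonempty.some, Set.empty_subset _⟩
  have hchain := hS.isChain_reflTransGen
  obtain ⟨u, hu, hmin⟩ := IsChain.exists_forall_rel_of_finite
    (r := Function.swap (ReflTransGen (HasArc lab))) hchain.symm S.toFinite hne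
  obtain ⟨v, hv, hmax⟩ := hchain.exists_forall_rel_of_finite S.toFinite hne
  obtain ⟨R, huR, hvR⟩ := hS.tempConnected hu hv
  exact ⟨R, fun s hs =>
    R.mem_vertexSet_of_reflTransGen htree.2 htree.1.isAcyclic huR hvR (hmin s hs) (hmax s hs)⟩

/-- In a temporal oriented tree, a set of vertices is contained in some temporal path iff
it is a clique of the connectivity graph. -/
theorem subset_tpath_iff_clique {V : Type*} [Fintype V] (lab : V → V → Finset ℕ)
    (hpos : PositiveLabels lab) (htree : IsTemporalOrientedTree lab) (S : Set V) :
    (∃ P : TPath lab, S ⊆ P.vertexSet) ↔ (connGraph lab).IsClique S :=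
  subset_tpath_iff_clique_general lab htree S
end

section
/- Let 𝒯 = (T, λ) be a temporal oriented tree and let G be its connectivity graph. Then G contains no induced cycle of length exactly 6. -/
/-!
Every arc `p → q` of the tree is a bridge of the underlying graph, and as the opposite arc is
absent, a temporal path can cross the cut at `pq` only from the side of `p` to the side of `q`.
Two temporal paths through a common arc can be spliced at it. Hence, along an induced hexagon
`c 0, …, c 5` of the connectivity graph, lying on the `q`-side of such a cut propagates from one
hexagon vertex to the next. Join consecutive hexagon vertices by temporal paths. If two
consecutive paths point the same way round the hexagon, this propagation, started at the last
arc of the first path, runs all the way round and contradicts itself. Otherwise the orientations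
alternate; every path then first shares its arcs with one neighbouring path and afterwards with
the other, all six switching vertices coincide, and the three paths into the sinks `c 1, c 3, c 5`
cannot leave this common vertex in any order.
-/

section

open SimpleGraph

variable {V : Type*} {lab : V → V → Finset ℕ}

namespace TPath

/-- Indices beyond `P.len` give the last vertex. -/
def vertex (P : TPath lab) (i : ℕ) : V := P.verts ⟨min i P.len, by omega⟩

/-- Indices `i ≥ P.len` give the junk value `0`. -/
def time (P : TPath lab) (i : ℕ) : ℕ := if h : i < P.len then P.times ⟨i, h⟩ else 0

def HasArc (P : TPath lab) (p q : V) : Prop :=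
  ∃ j < P.len, P.vertex j = p ∧ P.vertex (j + 1) = q

variable {P Q : TPath lab} {i j : ℕ} {p q u v : V}

lemma vertex_of_le (h : i ≤ P.len) : P.vertex i = P.verts ⟨i, by omega⟩ := by
  simp only [vertex, Nat.min_eq_left h]

lemma vertex_inj (hi : i ≤ P.len) (hj : j ≤ P.len) : P.vertex i = P.vertex j ↔ i = j := by
  rw [vertex_of_le hi, vertex_of_le hj, P.inj.eq_iff, Fin.mk.injEq]

lemma time_lt_time (hij : i < j) (hj : j < P.len) : P.time i < P.time j := by
  rw [time, time, dif_pos (hij.trans hj), dif_pos hj]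
  exact P.mono hij

lemma time_le_time (hij : i ≤ j) (hj : j < P.len) : P.time i ≤ P.time j := by
  obtain rfl | hij := hij.eq_or_lt
  exacts [le_rfl, (time_lt_time hij hj).le]

lemma time_mem_lab (h : i < P.len) : P.time i ∈ lab (P.vertex i) (P.vertex (i + 1)) := by
  rw [time, dif_pos h, vertex_of_le h.le, vertex_of_le h]
  exact P.mem_lab ⟨i, h⟩

lemma vertex_mem_vertexSet (P : TPath lab) (i : ℕ) : P.vertex i ∈ P.vertexSet := ⟨_, rfl⟩

lemma mem_vertexSet_iff : v ∈ P.vertexSet ↔ ∃ i ≤ P.len, P.vertex i = v := by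
  refine ⟨fun ⟨i, hi⟩ => ⟨i, by omega, by rw [vertex_of_le (by omega), ← hi]⟩, ?_⟩
  rintro ⟨i, -, rfl⟩
  exact P.vertex_mem_vertexSet i

lemma fromTo_iff : P.FromTo u v ↔ P.vertex 0 = u ∧ P.vertex P.len = v := by
  rw [vertex_of_le (Nat.zero_le _), vertex_of_le le_rfl]
  rfl

lemma HasArc.fst_mem (h : P.HasArc p q) : p ∈ P.vertexSet := by
  obtain ⟨j, -, rfl, -⟩ := h
  exact P.vertex_mem_vertexSet j

lemma HasArc.snd_mem (h : P.HasArc p q) : q ∈ P.vertexSet := by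
  obtain ⟨j, -, -, rfl⟩ := h
  exact P.vertex_mem_vertexSet (j + 1)

lemma HasArc.nonempty_lab (h : P.HasArc p q) : (lab p q).Nonempty := by
  obtain ⟨j, hj, rfl, rfl⟩ := h
  exact ⟨_, P.time_mem_lab hj⟩

lemma HasArc.vertex_succ_eq (h : P.HasArc p q) (hi : i ≤ P.len) (hp : P.vertex i = p) :
    P.vertex (i + 1) = q := by
  obtain ⟨j, hj, rfl, rfl⟩ := h
  rw [(P.vertex_inj hi hj.le).1 hp]

def ofFun (n : ℕ) (f : ℕ → V) (g : ℕ → ℕ) (hf : ∀ i ≤ n, ∀ j ≤ n, f i = f j → i = j)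
    (hg : ∀ i, i + 1 < n → g i < g (i + 1)) (hfg : ∀ i < n, g i ∈ lab (f i) (f (i + 1))) :
    TPath lab where
  len := n
  verts i := f i
  times i := g i
  inj i j h := Fin.ext (hf i (by omega) j (by omega) h)
  mono i j hij := by
    have := strictMonoOn_Iic_of_lt_succ (ψ := g) (n := n - 1) fun m hm => hg m (by omega)
    exact this (show i.val ≤ n - 1 by omega) (show j.val ≤ n - 1 by omega) hij
  mem_lab i := hfg i i.2

lemma ofFun_len {n : ℕ} {f : ℕ → V} {g : ℕ → ℕ} {hf hg hfg} :
    (ofFun (lab := lab) n f g hf hg hfg).len = n :=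
  rfl

lemma ofFun_vertex {n : ℕ} {f : ℕ → V} {g : ℕ → ℕ} {hf hg hfg} (h : i ≤ n) :
    (ofFun (lab := lab) n f g hf hg hfg).vertex i = f i := by
  rw [vertex_of_le h]
  rfl

def segment (P : TPath lab) (a b : ℕ) (hab : a ≤ b) (hb : b ≤ P.len) : TPath lab :=
  ofFun (b - a) (fun j => P.vertex (a + j)) (fun j => P.time (a + j))
    (fun i hi j hj h => by rw [vertex_inj (by omega) (by omega)] at h; omega)
    (fun i hi => time_lt_time (by omega) (by omega))
    (fun i hi => by rw [← add_assoc]; exact time_mem_lab (by omega))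

lemma segment_fromTo (P : TPath lab) {a b : ℕ} (hab : a ≤ b) (hb : b ≤ P.len) :
    (P.segment a b hab hb).FromTo (P.vertex a) (P.vertex b) := by
  rw [fromTo_iff, segment, ofFun_len, ofFun_vertex (Nat.zero_le _), ofFun_vertex le_rfl,
    Nat.add_sub_cancel' hab]
  exact ⟨rfl, rfl⟩

def spliceVertex (P Q : TPath lab) (m r j : ℕ) : V :=
  if j ≤ m then P.vertex j else Q.vertex (r + j - m)

def spliceTime (P Q : TPath lab) (m r j : ℕ) : ℕ :=
  if j < m then P.time j else Q.time (r + j - m)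

lemma spliceTime_lt_succ {m r : ℕ} (hm : m ≤ P.len) (ht : ∀ i < m, r < Q.len → P.time i < Q.time r)
    (hi : i + 1 < m + (Q.len - r)) : P.spliceTime Q m r i < P.spliceTime Q m r (i + 1) := by
  simp only [spliceTime]
  split_ifs with h1 h2 h2
  · exact P.time_lt_time (by omega) (by omega)
  · rw [show r + (i + 1) - m = r by omega]
    exact ht i h1 (by omega)
  · omega
  · exact Q.time_lt_time (by omega) (by omega)

lemma spliceTime_mem_lab {m r : ℕ} (hm : m ≤ P.len) (hv : P.vertex m = Q.vertex r)
    (hi : i < m + (Q.len - r)) :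
    P.spliceTime Q m r i ∈ lab (P.spliceVertex Q m r i) (P.spliceVertex Q m r (i + 1)) := by
  rcases lt_trichotomy i m with him | rfl | hmi
  · simp only [spliceTime, spliceVertex, if_pos him, if_pos him.le,
      if_pos (show i + 1 ≤ m by omega)]
    exact P.time_mem_lab (by omega)
  · simp only [spliceTime, spliceVertex, lt_irrefl, le_refl, if_true, if_false,
      show ¬ i + 1 ≤ i by omega]
    rw [hv, Nat.add_sub_cancel, show r + (i + 1) - i = r + 1 by omega]
    exact Q.time_mem_lab (by omega)
  · simp only [spliceTime, spliceVertex, show ¬ i < m by omega, show ¬ i ≤ m by omega,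
      show ¬ i + 1 ≤ m by omega, if_false]
    rw [show r + (i + 1) - m = r + i - m + 1 by omega]
    exact Q.time_mem_lab (by omega)

end TPath

open TPath

def Reaches (lab : V → V → Finset ℕ) (u v : V) : Prop := ∃ P : TPath lab, P.FromTo u v

lemma TPath.FromTo.fst_mem {P : TPath lab} {u v : V} (h : P.FromTo u v) : u ∈ P.vertexSet :=
  ⟨0, h.1⟩

lemma TPath.FromTo.snd_mem {P : TPath lab} {u v : V} (h : P.FromTo u v) : v ∈ P.vertexSet :=
  ⟨Fin.last _, h.2⟩

lemma TPath.FromTo.tempConnected {P : TPath lab} {u v : V} (h : P.FromTo u v) :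
    TempConnected lab u v :=
  ⟨P, h.fst_mem, h.snd_mem⟩

lemma Reaches.tempConnected {u v : V} (h : Reaches lab u v) : TempConnected lab u v :=
  h.elim fun _ hP => hP.tempConnected

lemma TempConnected.symm {u v : V} (h : TempConnected lab u v) : TempConnected lab v u :=
  h.imp fun _ hP => ⟨hP.2, hP.1⟩

lemma TempConnected.exists_fromTo {u v : V} (h : TempConnected lab u v) :
    ∃ P : TPath lab, P.FromTo u v ∨ P.FromTo v u := by
  obtain ⟨P, hu, hv⟩ := h
  obtain ⟨a, ha, rfl⟩ := mem_vertexSet_iff.1 hu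
  obtain ⟨b, hb, rfl⟩ := mem_vertexSet_iff.1 hv
  rcases le_total a b with hab | hba
  · exact ⟨_, Or.inl (P.segment_fromTo hab hb)⟩
  · exact ⟨_, Or.inr (P.segment_fromTo hba ha)⟩

def IsTemporalOrientedForest (lab : V → V → Finset ℕ) : Prop :=
  (underlyingGraph lab).IsAcyclic ∧ ∀ u v : V, (lab u v).Nonempty → lab v u = ∅

lemma IsTemporalOrientedTree.isTemporalOrientedForest (h : IsTemporalOrientedTree lab) :
    IsTemporalOrientedForest lab :=
  ⟨h.1.isAcyclic, h.2⟩

def CutSide (lab : V → V → Finset ℕ) (p q z : V) : Prop :=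
  ((underlyingGraph lab).deleteEdges {s(p, q)}).Reachable z p

namespace IsTemporalOrientedForest

variable {P : TPath lab} {a b k : ℕ} {p q s t : V}

lemma ne_of_nonempty (hF : IsTemporalOrientedForest lab) (hpq : (lab p q).Nonempty) :
    p ≠ q := by
  rintro rfl
  simp [hF.2 p p hpq] at hpq

lemma not_cutSide_snd (hF : IsTemporalOrientedForest lab) (hpq : (lab p q).Nonempty) :
    ¬ CutSide lab p q q := fun h =>
  isAcyclic_iff_forall_adj_isBridge.1 hF.1 ⟨hF.ne_of_nonempty hpq, Or.inl hpq⟩ h.symm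

/-- Along a temporal path the side of the cut at `pq` can only change by traversing `p → q`,
since the opposite arc `q → p` does not exist. -/
lemma cutSide_step (hF : IsTemporalOrientedForest lab) (hpq : (lab p q).Nonempty) {i : ℕ}
    (hi : i < P.len) :
    (P.vertex i = p ∧ P.vertex (i + 1) = q) ∨
      (CutSide lab p q (P.vertex i) ↔ CutSide lab p q (P.vertex (i + 1))) := by
  have ht := P.time_mem_lab hi
  by_cases he : s(P.vertex i, P.vertex (i + 1)) = s(p, q)
  · rcases Sym2.eq_iff.1 he with h | ⟨rfl, rfl⟩
    · exact Or.inl h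
    · simp [hF.2 _ _ hpq] at ht
  · have hadj : ((underlyingGraph lab).deleteEdges {s(p, q)}).Adj
        (P.vertex i) (P.vertex (i + 1)) := by
      refine (deleteEdges_adj ..).2 ⟨⟨?_, Or.inl ⟨_, ht⟩⟩, he⟩
      rw [Ne, P.vertex_inj hi.le hi]
      omega
    exact Or.inr ⟨hadj.symm.reachable.trans, hadj.reachable.trans⟩

lemma cutSide_iff_of_forall (hF : IsTemporalOrientedForest lab) (hpq : (lab p q).Nonempty)
    (hab : a ≤ b) (hb : b ≤ P.len)
    (h : ∀ i, a ≤ i → i < b → ¬ (P.vertex i = p ∧ P.vertex (i + 1) = q)) :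
    CutSide lab p q (P.vertex a) ↔ CutSide lab p q (P.vertex b) := by
  induction b, hab using Nat.le_induction with
  | base => rfl
  | succ b hab ih =>
    refine (ih (by omega) fun i hi hib => h i hi (by omega)).trans ?_
    exact (hF.cutSide_step hpq (by omega)).resolve_left (h b hab (by omega))

lemma cutSide_vertex_of_le (hF : IsTemporalOrientedForest lab) (hpq : (lab p q).Nonempty)
    (hk : P.vertex k = p) (hkP : k ≤ P.len) (ha : a ≤ k) : CutSide lab p q (P.vertex a) := by
  refine (hF.cutSide_iff_of_forall hpq ha hkP fun i hai hik h => ?_).2 (hk ▸ Reachable.refl _)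
  rw [← hk, P.vertex_inj (by omega) hkP] at h
  omega

lemma not_cutSide_vertex_of_le (hF : IsTemporalOrientedForest lab) (hpq : (lab p q).Nonempty)
    (hk : P.vertex k = q) (ha : k ≤ a) (haP : a ≤ P.len) : ¬ CutSide lab p q (P.vertex a) := by
  subst hk
  refine (hF.cutSide_iff_of_forall hpq ha haP fun i hki hia h => ?_).not.1
    (hF.not_cutSide_snd hpq)
  rw [P.vertex_inj (by omega) (by omega)] at h
  omega

lemma hasArc_of_cutSide (hF : IsTemporalOrientedForest lab) (hpq : (lab p q).Nonempty)
    (hP : P.FromTo s t) (hs : CutSide lab p q s) (ht : ¬ CutSide lab p q t) : P.HasArc p q := by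
  rw [fromTo_iff] at hP
  by_contra harc
  refine ht (hP.2 ▸ (hF.cutSide_iff_of_forall hpq (Nat.zero_le _) le_rfl
    fun i _ hi h => harc ⟨i, hi, h⟩).1 (hP.1 ▸ hs))

lemma not_cutSide_of_fromTo (hF : IsTemporalOrientedForest lab) (hpq : (lab p q).Nonempty)
    (hP : P.FromTo s t) (hs : ¬ CutSide lab p q s) : ¬ CutSide lab p q t := by
  rw [fromTo_iff] at hP
  intro ht
  by_cases harc : P.HasArc p q
  · obtain ⟨j, hj, hjp, -⟩ := harc
    exact hs (hP.1 ▸ hF.cutSide_vertex_of_le hpq hjp hj.le (Nat.zero_le _))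
  · exact hs (hP.1 ▸ (hF.cutSide_iff_of_forall hpq (Nat.zero_le _) le_rfl
      fun i _ hi h => harc ⟨i, hi, h⟩).2 (hP.2 ▸ ht))

lemma cutSide_of_hasArc (hF : IsTemporalOrientedForest lab) (harc : P.HasArc p q)
    (hP : P.FromTo s t) :
    CutSide lab p q s ∧ ¬ CutSide lab p q t := by
  obtain ⟨j, hj, hjp, hjq⟩ := id harc
  rw [fromTo_iff] at hP
  exact ⟨hP.1 ▸ hF.cutSide_vertex_of_le harc.nonempty_lab hjp hj.le (Nat.zero_le _),
    hP.2 ▸ hF.not_cutSide_vertex_of_le harc.nonempty_lab hjq hj le_rfl⟩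

variable {Q : TPath lab} {m r : ℕ} {u v x y : V}

/-- The prefix and the suffix lie on the two sides of the last arc of the prefix. -/
lemma eq_of_vertex_eq_of_le (hF : IsTemporalOrientedForest lab) (hm : m ≤ P.len)
    (hr : r ≤ Q.len) (hv : P.vertex m = Q.vertex r) {i j : ℕ} (hi : i ≤ m) (hj : r ≤ j)
    (hjQ : j ≤ Q.len) (h : P.vertex i = Q.vertex j) : i = m ∧ j = r := by
  obtain rfl | him := eq_or_lt_of_le hi
  · exact ⟨rfl, (Q.vertex_inj hjQ hr).1 (h.symm.trans hv)⟩
  have hpq : (lab (P.vertex (m - 1)) (P.vertex m)).Nonempty := by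
    have := P.time_mem_lab (i := m - 1) (by omega)
    rw [Nat.sub_add_cancel (by omega)] at this
    exact ⟨_, this⟩
  exact absurd (h ▸ hF.cutSide_vertex_of_le hpq rfl (by omega) (by omega))
    (hF.not_cutSide_vertex_of_le hpq hv.symm hj hjQ)

lemma spliceVertex_injOn (hF : IsTemporalOrientedForest lab) (hm : m ≤ P.len) (hr : r ≤ Q.len)
    (hv : P.vertex m = Q.vertex r) {i j : ℕ} (hi : i ≤ m + (Q.len - r))
    (hj : j ≤ m + (Q.len - r)) (h : P.spliceVertex Q m r i = P.spliceVertex Q m r j) : i = j := by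
  simp only [spliceVertex] at h
  split_ifs at h with him hjm hjm
  · exact (P.vertex_inj (by omega) (by omega)).1 h
  · have := hF.eq_of_vertex_eq_of_le hm hr hv him (j := r + j - m) (by omega) (by omega) h
    omega
  · have := hF.eq_of_vertex_eq_of_le hm hr hv hjm (j := r + i - m) (by omega) (by omega) h.symm
    omega
  · have := (Q.vertex_inj (by omega) (by omega)).1 h
    omega

lemma reaches_of_splice (hF : IsTemporalOrientedForest lab) (hm : m ≤ P.len)
    (hr : r ≤ Q.len) (hv : P.vertex m = Q.vertex r)
    (ht : ∀ i < m, r < Q.len → P.time i < Q.time r) :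
    Reaches lab (P.vertex 0) (Q.vertex Q.len) := by
  refine ⟨ofFun (m + (Q.len - r)) (P.spliceVertex Q m r) (P.spliceTime Q m r)
    (fun i hi j hj => hF.spliceVertex_injOn hm hr hv hi hj)
    (fun i hi => spliceTime_lt_succ hm ht hi) (fun i hi => spliceTime_mem_lab hm hv hi),
    fromTo_iff.2 ⟨?_, ?_⟩⟩
  · rw [ofFun_vertex (Nat.zero_le _)]
    simp [spliceVertex]
  · rw [ofFun_len, ofFun_vertex le_rfl, spliceVertex]
    split_ifs with h
    · rw [show m + (Q.len - r) = m by omega, hv, show r = Q.len by omega]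
    · rw [show r + (m + (Q.len - r)) - m = Q.len by omega]

lemma time_lt_of_not_tempConnected (hF : IsTemporalOrientedForest lab) (hP : P.FromTo u v)
    (hQ : Q.FromTo x y) (h : ¬ TempConnected lab u y) (hm : m < P.len) (hr : r < Q.len)
    (hv : P.vertex m = Q.vertex r) : Q.time r < P.time m := by
  rw [fromTo_iff] at hP hQ
  by_contra! hle
  exact h (hP.1 ▸ hQ.2 ▸ (hF.reaches_of_splice hm.le hr.le hv fun i hi _ =>
    (P.time_lt_time hi hm).trans_le hle).tempConnected)

/-- Two temporal paths through a common arc can be spliced at its head, in one order or the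
other depending on which path traverses it first. -/
lemma tempConnected_of_hasArc (hF : IsTemporalOrientedForest lab) (hP : P.FromTo u v)
    (hQ : Q.FromTo x y) (hPa : P.HasArc p q) (hQa : Q.HasArc p q) :
    TempConnected lab u y ∨ TempConnected lab x v := by
  obtain ⟨k, hk, -, hkq⟩ := hPa
  obtain ⟨l, hl, -, hlq⟩ := hQa
  rw [fromTo_iff] at hP hQ
  rcases le_total (P.time k) (Q.time l) with h | h
  · refine Or.inl (hP.1 ▸ hQ.2 ▸ Reaches.tempConnected ?_)
    exact hF.reaches_of_splice hk hl (hkq.trans hlq.symm) fun i hi hlQ =>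
      ((P.time_le_time (by omega) hk).trans h).trans_lt (Q.time_lt_time (by omega) hlQ)
  · refine Or.inr (hQ.1 ▸ hP.2 ▸ Reaches.tempConnected ?_)
    exact hF.reaches_of_splice hl hk (hlq.trans hkq.symm) fun i hi hkP =>
      ((Q.time_le_time (by omega) hl).trans h).trans_lt (P.time_lt_time (by omega) hkP)

/-- The cut at the arc leaving the meeting vertex separates the start of `Q` from the common
end `t`, so `Q` has to cross it. -/
lemma hasArc_of_vertex_mem (hF : IsTemporalOrientedForest lab) {s s' t : V} {j : ℕ}
    (hP : P.FromTo s t) (hQ : Q.FromTo s' t) (hj : j < P.len)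
    (hmem : P.vertex j ∈ Q.vertexSet) : Q.HasArc (P.vertex j) (P.vertex (j + 1)) := by
  have hpq : (lab (P.vertex j) (P.vertex (j + 1))).Nonempty := ⟨_, P.time_mem_lab hj⟩
  obtain ⟨l, hl, hlj⟩ := mem_vertexSet_iff.1 hmem
  rw [fromTo_iff] at hP hQ
  exact hF.hasArc_of_cutSide hpq (fromTo_iff.2 ⟨rfl, hQ.2.trans hP.2.symm⟩)
    (hF.cutSide_vertex_of_le hpq hlj hl (Nat.zero_le _))
    (hF.not_cutSide_vertex_of_le hpq rfl hj le_rfl)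

lemma vertex_mem_of_vertex_mem (hF : IsTemporalOrientedForest lab) {s s' t : V} {k j : ℕ}
    (hP : P.FromTo s t) (hQ : Q.FromTo s' t) (hk : P.vertex k ∈ Q.vertexSet) (hkj : k ≤ j)
    (hj : j ≤ P.len) : P.vertex j ∈ Q.vertexSet := by
  induction j, hkj using Nat.le_induction with
  | base => exact hk
  | succ j _ ih => exact (hF.hasArc_of_vertex_mem hP hQ (by omega) (ih (by omega))).snd_mem

/-- A path from `y` to `x` would have to traverse `p → q` and could then be spliced with `P`. -/
lemma not_cutSide_of_tempConnected (hF : IsTemporalOrientedForest lab) (hP : P.FromTo u v)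
    (harc : P.HasArc p q) (hxy : TempConnected lab x y) (hx : ¬ CutSide lab p q x)
    (hux : ¬ TempConnected lab u x) (hyv : ¬ TempConnected lab y v) : ¬ CutSide lab p q y := by
  obtain ⟨R, hR | hR⟩ := hxy.exists_fromTo
  · exact hF.not_cutSide_of_fromTo harc.nonempty_lab hR hx
  · intro hy
    have hRa := hF.hasArc_of_cutSide harc.nonempty_lab hR hy hx
    exact (hF.tempConnected_of_hasArc hP hR harc hRa).elim hux hyv

end IsTemporalOrientedForest

structure IsTempHexagon (lab : V → V → Finset ℕ) (c : Fin 6 → V) : Prop where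
  tempConnected : ∀ i, TempConnected lab (c i) (c (i + 1))
  not_tempConnected_two : ∀ i, ¬ TempConnected lab (c i) (c (i + 2))
  not_tempConnected_three : ∀ i, ¬ TempConnected lab (c i) (c (i + 3))

namespace IsTempHexagon

variable {c : Fin 6 → V} {P : TPath lab} {p q : V}

lemma comp_add (H : IsTempHexagon lab c) (k : Fin 6) :
    IsTempHexagon lab (fun i => c (k + i)) where
  tempConnected i := by simpa only [add_assoc] using H.tempConnected (k + i)
  not_tempConnected_two i := by simpa only [add_assoc] using H.not_tempConnected_two (k + i)
  not_tempConnected_three i := by simpa only [add_assoc] using H.not_tempConnected_three (k + i)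

lemma comp_sub (H : IsTempHexagon lab c) (k : Fin 6) :
    IsTempHexagon lab (fun i => c (k - i)) where
  tempConnected i := by
    have := (H.tempConnected (k - (i + 1))).symm
    rwa [show k - (i + 1) + 1 = k - i by abel] at this
  not_tempConnected_two i h := H.not_tempConnected_two (k - (i + 2)) <| by
    rw [show k - (i + 2) + 2 = k - i by abel]
    exact h.symm
  not_tempConnected_three i h := H.not_tempConnected_three (k - (i + 3)) <| by
    rw [show k - (i + 3) + 3 = k - i by abel]
    exact h.symm

lemma ne_zero_one (H : IsTempHexagon lab c) : c 0 ≠ c 1 := fun h =>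
  H.not_tempConnected_two 0 (h ▸ H.tempConnected 1)

lemma not_cutSide_five (H : IsTempHexagon lab c) (hF : IsTemporalOrientedForest lab)
    (hP : P.FromTo (c 0) (c 1)) (harc : P.HasArc p q) (h2 : ¬ CutSide lab p q (c 2)) :
    ¬ CutSide lab p q (c 5) := by
  have h3 := hF.not_cutSide_of_tempConnected hP harc (H.tempConnected 2) h2
    (H.not_tempConnected_two 0) fun h => H.not_tempConnected_two 1 h.symm
  have h4 := hF.not_cutSide_of_tempConnected hP harc (H.tempConnected 3) h3
    (H.not_tempConnected_three 0) (H.not_tempConnected_three 4)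
  exact hF.not_cutSide_of_tempConnected hP harc (H.tempConnected 4) h4
    (fun h => H.not_tempConnected_two 4 h.symm) (H.not_tempConnected_two 5)

/-- Cut at the last arc `p → c 1` of a path from `c 0` to `c 1`: going around the hexagon from
`c 1`, the side of `c 1` can only be left through that arc, which puts `c 1` on a path with
`c 5`. -/
lemma false_of_reaches_of_reaches (H : IsTempHexagon lab c) (hF : IsTemporalOrientedForest lab)
    (h01 : Reaches lab (c 0) (c 1)) (h12 : Reaches lab (c 1) (c 2)) : False := by
  obtain ⟨P, hP⟩ := h01
  have hlen : 0 < P.len := by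
    refine Nat.pos_of_ne_zero fun h => H.ne_zero_one ?_
    rw [← (fromTo_iff.1 hP).1, ← (fromTo_iff.1 hP).2, h]
  have harc : P.HasArc (P.vertex (P.len - 1)) (c 1) :=
    ⟨P.len - 1, by omega, rfl, by rw [Nat.sub_add_cancel hlen, (fromTo_iff.1 hP).2]⟩
  have hpq := harc.nonempty_lab
  obtain ⟨h0, h1⟩ := hF.cutSide_of_hasArc harc hP
  obtain ⟨Q, hQ⟩ := h12
  have h5 := H.not_cutSide_five hF hP harc (hF.not_cutSide_of_fromTo hpq hQ h1)
  obtain ⟨R, hR | hR⟩ := (H.tempConnected 5).exists_fromTo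
  · exact hF.not_cutSide_of_fromTo hpq hR h5 h0
  · exact H.not_tempConnected_two 5
      ⟨R, hR.snd_mem, (hF.hasArc_of_cutSide hpq hR h0 h5).snd_mem⟩

end IsTempHexagon

structure IsAltPaths (c : Fin 6 → V) (P : Fin 6 → TPath lab) : Prop where
  fromTo_of_even : ∀ i : Fin 6, Even i.val → (P i).FromTo (c i) (c (i + 1))
  fromTo_of_odd : ∀ i : Fin 6, Odd i.val → (P i).FromTo (c (i + 1)) (c i)

def TPath.SplitsAt (A B Z : TPath lab) (k : ℕ) : Prop :=
  k < A.len ∧ (∀ j < k, Z.HasArc (A.vertex j) (A.vertex (j + 1))) ∧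
    ∀ j, k ≤ j → j < A.len → B.HasArc (A.vertex j) (A.vertex (j + 1))

namespace IsAltPaths

variable {c : Fin 6 → V} {P : Fin 6 → TPath lab} {p q : V}

lemma comp_add_two (hP : IsAltPaths c P) :
    IsAltPaths (fun i => c (2 + i)) (fun i => P (2 + i)) where
  fromTo_of_even i hi := by
    simpa only [add_assoc] using hP.fromTo_of_even (2 + i) (by revert i; decide)
  fromTo_of_odd i hi := by
    simpa only [add_assoc] using hP.fromTo_of_odd (2 + i) (by revert i; decide)

lemma comp_sub (hP : IsAltPaths c P) :
    IsAltPaths (fun i => c (2 - i)) (fun i => P (1 - i)) where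
  fromTo_of_even i hi := by
    have := hP.fromTo_of_odd (1 - i) (by revert i; decide)
    rw [(by decide : ∀ j : Fin 6, 2 - (j + 1) = 1 - j)]
    rwa [(by decide : ∀ j : Fin 6, 1 - j + 1 = 2 - j)] at this
  fromTo_of_odd i hi := by
    have := hP.fromTo_of_even (1 - i) (by revert i; decide)
    rw [(by decide : ∀ j : Fin 6, 2 - (j + 1) = 1 - j)]
    rwa [(by decide : ∀ j : Fin 6, 1 - j + 1 = 2 - j)] at this

lemma not_hasArc_one_and_five (hF : IsTemporalOrientedForest lab) (H : IsTempHexagon lab c)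
    (hP : IsAltPaths c P) (h1 : (P 1).HasArc p q) (h5 : (P 5).HasArc p q) : False := by
  have hP1 : (P 1).FromTo (c 2) (c 1) := hP.fromTo_of_odd 1 (by decide)
  have hP5 : (P 5).FromTo (c 0) (c 5) := hP.fromTo_of_odd 5 (by decide)
  have h4 := hF.not_cutSide_of_tempConnected hP1 h1 (H.tempConnected 4).symm
    (hF.cutSide_of_hasArc h5 hP5).2 (H.not_tempConnected_three 2) (H.not_tempConnected_three 4)
  have h3 := hF.not_cutSide_of_tempConnected hP1 h1 (H.tempConnected 3).symm h4
    (H.not_tempConnected_two 2) fun h => H.not_tempConnected_two 1 h.symm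
  exact hF.not_cutSide_of_tempConnected hP5 h5 (H.tempConnected 2).symm h3
    (H.not_tempConnected_three 0) (H.not_tempConnected_three 2) (hF.cutSide_of_hasArc h1 hP1).1

lemma hasArc_one_or_five (hF : IsTemporalOrientedForest lab) (H : IsTempHexagon lab c)
    (hP : IsAltPaths c P) {j : ℕ} (hj : j < (P 0).len) :
    (P 1).HasArc ((P 0).vertex j) ((P 0).vertex (j + 1)) ∨
      (P 5).HasArc ((P 0).vertex j) ((P 0).vertex (j + 1)) := by
  have hP0 : (P 0).FromTo (c 0) (c 1) := hP.fromTo_of_even 0 (by decide)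
  have harc : (P 0).HasArc ((P 0).vertex j) ((P 0).vertex (j + 1)) := ⟨j, hj, rfl, rfl⟩
  obtain ⟨h0, h1⟩ := hF.cutSide_of_hasArc harc hP0
  by_cases h2 : CutSide lab ((P 0).vertex j) ((P 0).vertex (j + 1)) (c 2)
  · exact Or.inl
      (hF.hasArc_of_cutSide harc.nonempty_lab (hP.fromTo_of_odd 1 (by decide)) h2 h1)
  · exact Or.inr (hF.hasArc_of_cutSide harc.nonempty_lab (hP.fromTo_of_odd 5 (by decide)) h0
      (H.not_cutSide_five hF hP0 harc h2))

variable {k0 k1 k2 : ℕ}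

lemma exists_splitsAt (hF : IsTemporalOrientedForest lab) (H : IsTempHexagon lab c)
    (hP : IsAltPaths c P) : ∃ k, (P 0).SplitsAt (P 1) (P 5) k := by
  classical
  have hP0 : (P 0).FromTo (c 0) (c 1) := hP.fromTo_of_even 0 (by decide)
  have hP1 : (P 1).FromTo (c 2) (c 1) := hP.fromTo_of_odd 1 (by decide)
  have hP5 : (P 5).FromTo (c 0) (c 5) := hP.fromTo_of_odd 5 (by decide)
  have hlen : 0 < (P 0).len := by
    refine Nat.pos_of_ne_zero fun h => H.ne_zero_one ?_
    rw [← (fromTo_iff.1 hP0).1, ← (fromTo_iff.1 hP0).2, h]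
  have hlast : (P 0).vertex ((P 0).len - 1) ∈ (P 1).vertexSet := by
    refine ((hP.hasArc_one_or_five hF H (j := (P 0).len - 1) (by omega)).resolve_right
      fun h5 => ?_).fst_mem
    rw [Nat.sub_add_cancel hlen, (fromTo_iff.1 hP0).2] at h5
    exact H.not_tempConnected_two 5 ⟨P 5, hP5.snd_mem, h5.snd_mem⟩
  have hex : ∃ k, (P 0).vertex k ∈ (P 1).vertexSet := ⟨_, hlast⟩
  have hk := Nat.find_min' hex hlast
  refine ⟨Nat.find hex, by omega, fun j hj => ?_, fun j hj hjl => ?_⟩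
  · exact (hP.hasArc_one_or_five hF H (by omega)).resolve_left fun h1 =>
      Nat.find_min hex hj h1.fst_mem
  · exact hF.hasArc_of_vertex_mem hP0 hP1 hjl
      (hF.vertex_mem_of_vertex_mem hP0 hP1 (Nat.find_spec hex) hj hjl.le)

lemma vertex_eq_of_splitsAt_zero_one (hF : IsTemporalOrientedForest lab)
    (H : IsTempHexagon lab c) (hP : IsAltPaths c P) (hs0 : (P 0).SplitsAt (P 1) (P 5) k0)
    (hs1 : (P 1).SplitsAt (P 0) (P 2) k1) : (P 0).vertex k0 = (P 1).vertex k1 := by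
  obtain ⟨hk0, hpre0, hsuf0⟩ := hs0
  obtain ⟨hk1, hpre1, hsuf1⟩ := hs1
  obtain ⟨m, hm, hm0, hm1⟩ := hsuf0 k0 le_rfl hk0
  rcases lt_trichotomy m k1 with hlt | rfl | hgt
  · have h2 := hpre1 m hlt
    rw [hm0, hm1] at h2
    exact (hP.comp_sub.not_hasArc_one_and_five hF (H.comp_sub 2) ⟨k0, hk0, rfl, rfl⟩ h2).elim
  · exact hm0.symm
  · obtain ⟨l, hl, hl0, hl1⟩ := hsuf1 (m - 1) (by omega) (by omega)
    rw [Nat.sub_add_cancel (by omega)] at hl1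
    have hlk : l + 1 = k0 := ((P 0).vertex_inj hl hk0.le).1 (hl1.trans hm0)
    refine (hP.not_hasArc_one_and_five hF H ⟨m - 1, by omega, hl0.symm, ?_⟩
      (hpre0 l (by omega))).elim
    rw [Nat.sub_add_cancel (by omega), hl1]

lemma vertex_eq_of_splitsAt_one_two (hF : IsTemporalOrientedForest lab)
    (H : IsTempHexagon lab c) (hP : IsAltPaths c P) (hs1 : (P 1).SplitsAt (P 0) (P 2) k1)
    (hs2 : (P 2).SplitsAt (P 3) (P 1) k2) : (P 1).vertex k1 = (P 2).vertex k2 := by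
  obtain ⟨hk1, hpre1, hsuf1⟩ := hs1
  obtain ⟨hk2, hpre2, hsuf2⟩ := hs2
  have hP1 : (P 1).FromTo (c 2) (c 1) := hP.fromTo_of_odd 1 (by decide)
  have hP2 : (P 2).FromTo (c 2) (c 3) := hP.fromTo_of_even 2 (by decide)
  have hcommon : ∀ j, j ≤ k1 → j ≤ k2 → (P 1).vertex j = (P 2).vertex j := by
    intro j
    induction j with
    | zero => intro _ _; rw [(fromTo_iff.1 hP1).1, (fromTo_iff.1 hP2).1]
    | succ j ih =>
      intro hj1 hj2
      exact ((hpre1 j (by omega)).vertex_succ_eq (by omega) (ih (by omega) (by omega)).symm).symm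
  rcases lt_trichotomy k1 k2 with hlt | rfl | hgt
  · have e := hcommon k1 le_rfl hlt.le
    have h0 := hsuf1 k1 le_rfl hk1
    rw [e, (hpre2 k1 hlt).vertex_succ_eq hk1.le e] at h0
    exact (hP.comp_sub.not_hasArc_one_and_five hF (H.comp_sub 2) h0
      ⟨k1, hlt.trans hk2, rfl, rfl⟩).elim
  · exact hcommon k1 le_rfl le_rfl
  · have e := hcommon k2 hgt.le le_rfl
    have h3 := hsuf2 k2 le_rfl hk2
    rw [← e, (hpre1 k2 hgt).vertex_succ_eq hk2.le e.symm] at h3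
    exact (hP.comp_add_two.not_hasArc_one_and_five hF (H.comp_add 2) h3
      ⟨k2, hgt.trans hk1, rfl, rfl⟩).elim

lemma exists_common_vertex (hF : IsTemporalOrientedForest lab) (H : IsTempHexagon lab c)
    (hP : IsAltPaths c P) : ∃ k1 < (P 1).len, ∃ k3 < (P 3).len, ∃ k5 < (P 5).len,
      (P 1).vertex k1 = (P 3).vertex k3 ∧ (P 3).vertex k3 = (P 5).vertex k5 := by
  obtain ⟨k1, s1⟩ : ∃ k, (P 1).SplitsAt (P 0) (P 2) k :=
    hP.comp_sub.exists_splitsAt hF (H.comp_sub 2)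
  obtain ⟨k2, s2⟩ : ∃ k, (P 2).SplitsAt (P 3) (P 1) k :=
    hP.comp_add_two.exists_splitsAt hF (H.comp_add 2)
  obtain ⟨k3, s3⟩ : ∃ k, (P 3).SplitsAt (P 2) (P 4) k :=
    hP.comp_add_two.comp_sub.exists_splitsAt hF ((H.comp_add 2).comp_sub 2)
  obtain ⟨k4, s4⟩ : ∃ k, (P 4).SplitsAt (P 5) (P 3) k :=
    hP.comp_add_two.comp_add_two.exists_splitsAt hF ((H.comp_add 2).comp_add 2)
  obtain ⟨k5, s5⟩ : ∃ k, (P 5).SplitsAt (P 4) (P 0) k :=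
    hP.comp_add_two.comp_add_two.comp_sub.exists_splitsAt hF
      (((H.comp_add 2).comp_add 2).comp_sub 2)
  have e12 := hP.vertex_eq_of_splitsAt_one_two hF H s1 s2
  have e23 : (P 2).vertex k2 = (P 3).vertex k3 :=
    hP.comp_add_two.vertex_eq_of_splitsAt_zero_one hF (H.comp_add 2) s2 s3
  have e34 : (P 3).vertex k3 = (P 4).vertex k4 :=
    hP.comp_add_two.vertex_eq_of_splitsAt_one_two hF (H.comp_add 2) s3 s4
  have e45 : (P 4).vertex k4 = (P 5).vertex k5 :=
    hP.comp_add_two.comp_add_two.vertex_eq_of_splitsAt_zero_one hF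
      ((H.comp_add 2).comp_add 2) s4 s5
  exact ⟨k1, s1.1, k3, s3.1, k5, s5.1, e12.trans e23, e34.trans e45⟩

end IsAltPaths

/-- Splicing two of the paths into the sinks at their common vertex is forbidden by the hexagon,
which forces their departure times from it to decrease cyclically. -/
lemma IsTempHexagon.not_isAltPaths {c : Fin 6 → V} {P : Fin 6 → TPath lab}
    (H : IsTempHexagon lab c) (hF : IsTemporalOrientedForest lab) (hP : IsAltPaths c P) :
    False := by
  obtain ⟨k1, hk1, k3, hk3, k5, hk5, e13, e35⟩ := hP.exists_common_vertex hF H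
  have hP1 : (P 1).FromTo (c 2) (c 1) := hP.fromTo_of_odd 1 (by decide)
  have hP3 : (P 3).FromTo (c 4) (c 3) := hP.fromTo_of_odd 3 (by decide)
  have hP5 : (P 5).FromTo (c 0) (c 5) := hP.fromTo_of_odd 5 (by decide)
  have t15 := hF.time_lt_of_not_tempConnected hP1 hP5 (H.not_tempConnected_three 2) hk1 hk5
    (e13.trans e35)
  have t31 := hF.time_lt_of_not_tempConnected hP3 hP1 (H.not_tempConnected_three 4) hk3 hk1
    e13.symm
  have t53 := hF.time_lt_of_not_tempConnected hP5 hP3 (H.not_tempConnected_three 0) hk5 hk3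
    e35.symm
  omega

lemma IsAltPaths.of_forall {c : Fin 6 → V} {P : Fin 6 → TPath lab}
    (hdir : ∀ i, (P i).FromTo (c i) (c (i + 1)) ∨ (P i).FromTo (c (i + 1)) (c i))
    (hfwd : ∀ i, (P i).FromTo (c i) (c (i + 1)) →
      ¬ (P (i + 1)).FromTo (c (i + 1)) (c (i + 1 + 1)))
    (hbwd : ∀ i, (P i).FromTo (c (i + 1)) (c i) →
      ¬ (P (i + 1)).FromTo (c (i + 1 + 1)) (c (i + 1))) :
    IsAltPaths c P ∨ IsAltPaths (fun i => c (1 + i)) (fun i => P (1 + i)) := by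
  set F : Fin 6 → Prop := fun i => (P i).FromTo (c i) (c (i + 1)) with hFdef
  have hstep : ∀ i, F (i + 1) ↔ ¬ F i := fun i =>
    ⟨fun h h' => hfwd i h' h,
      fun h => (hdir (i + 1)).resolve_right (hbwd i ((hdir i).resolve_left h))⟩
  have hpar : ∀ i : Fin 6, F i ↔ (F 0 ↔ Even i.val) := by
    intro i
    induction i using Fin.induction with
    | zero => simp
    | succ i ih =>
      rw [Fin.val_succ, ← Fin.coeSucc_eq_succ, hstep, ih, Fin.val_castSucc, Nat.even_add_one]
      tauto
  by_cases h0 : F 0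
  · refine Or.inl ⟨fun i hi => (hpar i).2 (iff_of_true h0 hi), fun i hi => ?_⟩
    refine (hdir i).resolve_left fun h => ?_
    exact Nat.not_even_iff_odd.2 hi (((hpar i).1 h).1 h0)
  · refine Or.inr ⟨fun i hi => ?_, fun i hi => ?_⟩
    · have := (hpar (1 + i)).2 (iff_of_false h0 ((by decide : ∀ j : Fin 6,
        Even j.val → ¬ Even (1 + j).val) i hi))
      simpa only [hFdef, add_assoc] using this
    · have := (hdir (1 + i)).resolve_left fun h => h0 <| ((hpar (1 + i)).1 h).2 <|
        (by decide : ∀ j : Fin 6, Odd j.val → Even (1 + j).val) i hi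
      simpa only [add_assoc] using this

lemma not_isTempHexagon (hF : IsTemporalOrientedForest lab) (c : Fin 6 → V) :
    ¬ IsTempHexagon lab c := by
  intro H
  choose P hP using fun i => (H.tempConnected i).exists_fromTo
  by_cases hfwd : ∃ i, (P i).FromTo (c i) (c (i + 1)) ∧
      (P (i + 1)).FromTo (c (i + 1)) (c (i + 1 + 1))
  · obtain ⟨i, h1, h2⟩ := hfwd
    rw [add_assoc, (by decide : (1 : Fin 6) + 1 = 2)] at h2
    exact (H.comp_add i).false_of_reaches_of_reaches hF ⟨_, by rwa [add_zero]⟩ ⟨_, h2⟩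
  by_cases hbwd : ∃ i, (P i).FromTo (c (i + 1)) (c i) ∧
      (P (i + 1)).FromTo (c (i + 1 + 1)) (c (i + 1))
  · obtain ⟨i, h1, h2⟩ := hbwd
    rw [add_assoc, (by decide : (1 : Fin 6) + 1 = 2)] at h2
    have e : i + 2 - 1 = i + 1 := by rw [add_sub_assoc, (by decide : (2 : Fin 6) - 1 = 1)]
    refine (H.comp_sub (i + 2)).false_of_reaches_of_reaches hF ⟨P (i + 1), ?_⟩ ⟨P i, ?_⟩
    · simpa only [sub_zero, e] using h2
    · simpa only [add_sub_cancel_right, e] using h1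
  simp only [not_exists, not_and] at hfwd hbwd
  rcases IsAltPaths.of_forall hP hfwd hbwd with hP' | hP'
  · exact H.not_isAltPaths hF hP'
  · exact (H.comp_add 1).not_isAltPaths hF hP'

lemma IsInducedCycle.isTempHexagon {c : Fin 6 → V} (hc : IsInducedCycle (connGraph lab) 6 c) :
    IsTempHexagon lab c where
  tempConnected i := ((hc.2 i (i + 1)).2 (by revert i; decide)).2
  not_tempConnected_two i h := (by decide : ∀ i : Fin 6,
      ¬ ((i.val + 1) % 6 = (i + 2).val ∨ ((i + 2).val + 1) % 6 = i.val)) i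
    ((hc.2 i (i + 2)).1 ⟨hc.1.ne ((by decide : ∀ i : Fin 6, i ≠ i + 2) i), h⟩)
  not_tempConnected_three i h := (by decide : ∀ i : Fin 6,
      ¬ ((i.val + 1) % 6 = (i + 3).val ∨ ((i + 3).val + 1) % 6 = i.val)) i
    ((hc.2 i (i + 3)).1 ⟨hc.1.ne ((by decide : ∀ i : Fin 6, i ≠ i + 3) i), h⟩)

end

theorem connGraph_no_c6_general {V : Type*} (lab : V → V → Finset ℕ)
    (htree : IsTemporalOrientedTree lab) :
    ¬ ∃ c : Fin 6 → V, IsInducedCycle (connGraph lab) 6 c :=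
  fun ⟨c, hc⟩ => not_isTempHexagon htree.isTemporalOrientedForest c hc.isTempHexagon

/-- The connectivity graph of a temporal oriented tree contains no induced 6-cycle. -/
theorem connGraph_no_c6 {V : Type*} [Fintype V] (lab : V → V → Finset ℕ)
    (hpos : PositiveLabels lab) (htree : IsTemporalOrientedTree lab) :
    ¬ ∃ c : Fin 6 → V, IsInducedCycle (connGraph lab) 6 c :=
  connGraph_no_c6_general lab htree
end
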